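/- Let $g$ be the generating function of the degree distribution, and let $\theta, h, \phi : [0,\infty) \to \mathbb{R}$ be $C^1$ functions with $\theta(0)=1$, $\phi(0)=0$, satisfying $\theta'(t) = -\lambda\phi(t)$, $h(t) = g'(\theta(t))/g'(1)$, and $\phi'(t) = -(\lambda+\gamma)\phi(t) - h'(t)$. Then for all $t \geq 0$, $\phi(t) = \theta(t) - \frac{\gamma}{\lambda}(1-\theta(t)) - \frac{g'(\theta(t))}{g'(1)}$, and consequently $\theta'(t) = -\lambda\theta(t) + \gamma(1-\theta(t)) + \lambda\frac{g'(\theta(t))}{g'(1)}$. -/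

import Mathlib

open Real

/-!
The quantity `φ - θ + (γ/λ)(1 - θ) + h` has zero derivative along the system, so it keeps its
value at `t = 0`, which is `0` because `h 0 = g'(1)/g'(1) = 1`. Solving for `φ` and substituting
into `θ' = -λφ` gives the closed equation for `θ`.
-/

section VolzMiller

variable {l γ : ℝ} {θ φ h h' : ℝ → ℝ}

theorem hasDerivAt_volzMiller_invariant (hl : l ≠ 0)
    (hθ' : ∀ t, HasDerivAt θ (-l * φ t) t)
    (hφ' : ∀ t, HasDerivAt φ (-(l + γ) * φ t - h' t) t)
    (hh' : ∀ t, HasDerivAt h (h' t) t) (t : ℝ) :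
    HasDerivAt (fun u => φ u - θ u + γ / l * (1 - θ u) + h u) 0 t := by
  have hsum := (((hφ' t).sub (hθ' t)).add
    (((hasDerivAt_const t 1).sub (hθ' t)).const_mul (γ / l))).add (hh' t)
  refine hsum.congr_deriv ?_
  field_simp
  ring

theorem volzMiller_invariant_eq (hl : l ≠ 0)
    (hθ' : ∀ t, HasDerivAt θ (-l * φ t) t)
    (hφ' : ∀ t, HasDerivAt φ (-(l + γ) * φ t - h' t) t)
    (hh' : ∀ t, HasDerivAt h (h' t) t) (t : ℝ) :
    φ t - θ t + γ / l * (1 - θ t) + h t = φ 0 - θ 0 + γ / l * (1 - θ 0) + h 0 :=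
  have hF := hasDerivAt_volzMiller_invariant hl hθ' hφ' hh'
  is_const_of_deriv_eq_zero (fun u => (hF u).differentiableAt) (fun u => (hF u).deriv) t 0

end VolzMiller

theorem theta_dynamics_general (l γ : ℝ) (hl : 0 < l)
    (g : ℝ → ℝ) (hg1 : 0 < deriv g 1)
    (θ φ : ℝ → ℝ) (h : ℝ → ℝ)
    (hθ0 : θ 0 = 1) (hφ0 : φ 0 = 0)
    (hh : ∀ t, h t = deriv g (θ t) / deriv g 1)
    (hhdiff : Differentiable ℝ h)
    (hθ' : ∀ t, HasDerivAt θ (-l * φ t) t)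
    (hφ' : ∀ t, HasDerivAt φ (-(l + γ) * φ t - deriv h t) t) :
    ∀ t, 0 ≤ t →
      (φ t = θ t - γ / l * (1 - θ t) - deriv g (θ t) / deriv g 1 ∧
       HasDerivAt θ
         (-l * θ t + γ * (1 - θ t) + l * (deriv g (θ t) / deriv g 1)) t) := by
  intro t _
  have hh0 : h 0 = 1 := by rw [hh 0, hθ0, div_self hg1.ne']
  have hinv := volzMiller_invariant_eq hl.ne' hθ' hφ' (fun s => (hhdiff s).hasDerivAt) t
  rw [hθ0, hφ0, hh0, hh t] at hinv
  have hφt : φ t = θ t - γ / l * (1 - θ t) - deriv g (θ t) / deriv g 1 := by linarith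
  refine ⟨hφt, (hθ' t).congr_deriv ?_⟩
  rw [hφt]
  field_simp
  ring

/-- Dynamics of `θ(t)` in the Volz–Miller derivation: given `θ' = -λφ`,
`h(t) = g'(θ(t))/g'(1)` and `φ' = -(λ+γ)φ - h'`, with `θ(0)=1`, `φ(0)=0`, one has
`φ(t) = θ(t) - (γ/λ)(1-θ(t)) - g'(θ(t))/g'(1)`, and consequently
`θ'(t) = -λθ(t) + γ(1-θ(t)) + λ g'(θ(t))/g'(1)`. -/
theorem theta_dynamics (l γ : ℝ) (hl : 0 < l) (hγ : 0 < γ)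
    (g : ℝ → ℝ) (hg : ContDiff ℝ 2 g) (hg1 : 0 < deriv g 1)
    (θ φ : ℝ → ℝ) (h : ℝ → ℝ)
    (hθ0 : θ 0 = 1) (hφ0 : φ 0 = 0)
    (hh : ∀ t, h t = deriv g (θ t) / deriv g 1)
    (hhdiff : Differentiable ℝ h)
    (hθ' : ∀ t, HasDerivAt θ (-l * φ t) t)
    (hφ' : ∀ t, HasDerivAt φ (-(l + γ) * φ t - deriv h t) t) :
    ∀ t, 0 ≤ t →
      (φ t = θ t - γ / l * (1 - θ t) - deriv g (θ t) / deriv g 1 ∧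
       HasDerivAt θ
         (-l * θ t + γ * (1 - θ t) + l * (deriv g (θ t) / deriv g 1)) t) :=
  theta_dynamics_general l γ hl g hg1 θ φ h hθ0 hφ0 hh hhdiff hθ' hφ'
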